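/- arXiv:1908.08183 — 2 statements merged into one kernel-verified Lean document; each statement's English description precedes it below -/
import Mathlib

section
/- Having an agreement embedding is a transitive relation: if G has an agreement embedding into H and H has an agreement embedding into N, then G has an agreement embedding into N. -/
open Relation

/-- An undirected multigraph with finitely many vertices and edges, whose
vertices may carry labels (natural numbers, standing for the taxa in `X`).
Each edge `e` has two (possibly equal) endpoints `fst e` and `snd e`. -/
structure Multigraph : Type 1 where
  V : Type
  E : Type
  finV : Finite V
  finE : Finite E
  fst : E → V
  snd : E → V
  label : V → Option ℕ

attribute [instance] Multigraph.finV Multigraph.finE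

namespace Multigraph

variable (G : Multigraph)

/-- The degree of a vertex (loops count twice). -/
noncomputable def degree (v : G.V) : ℕ :=
  {e : G.E | G.fst e = v}.ncard + {e : G.E | G.snd e = v}.ncard

/-- A sprout: an unlabelled degree-one vertex. -/
def IsSprout (v : G.V) : Prop := G.label v = none ∧ G.degree v = 1

/-- A labelled isolated vertex (labelled singleton). -/
def IsLabelledIsolated (v : G.V) : Prop := (G.label v).isSome ∧ G.degree v = 0

def Adj (u v : G.V) : Prop :=
  ∃ e, (G.fst e = u ∧ G.snd e = v) ∨ (G.fst e = v ∧ G.snd e = u)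

/-- Reachability by walks. -/
def Reach : G.V → G.V → Prop := ReflTransGen G.Adj

def Connected : Prop := Nonempty G.V ∧ ∀ u v, G.Reach u v

/-- Delete a set of edges (keeping all vertices). -/
def deleteEdges (F : Set G.E) : Multigraph where
  V := G.V
  E := {e : G.E // e ∉ F}
  finV := G.finV
  finE := Subtype.finite
  fst := fun e => G.fst e.1
  snd := fun e => G.snd e.1
  label := G.label

/-- A cut-edge: deleting it disconnects two previously connected vertices. -/
def IsCutEdge (e : G.E) : Prop :=
  ∃ u v, G.Reach u v ∧ ¬ (G.deleteEdges {e}).Reach u v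

/-- The reticulation number (cyclomatic number) of a graph, `|E| - (|V| - 1)`. -/
noncomputable def tier : ℕ := Nat.card G.E - (Nat.card G.V - 1)

/-- Deleting the edge set `F` yields a spanning tree: the remaining graph is
connected and acyclic (every remaining edge is a cut-edge). -/
def YieldsSpanningTree (F : Set G.E) : Prop :=
  (G.deleteEdges F).Connected ∧ ∀ e, (G.deleteEdges F).IsCutEdge e

/-! ### Walks -/

/-- A dart: an edge together with a direction. -/
abbrev Dart := G.E × Bool

def dartSrc (d : G.Dart) : G.V := if d.2 then G.fst d.1 else G.snd d.1

def dartTgt (d : G.Dart) : G.V := if d.2 then G.snd d.1 else G.fst d.1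

/-- `IsWalk u v l`: the list of darts `l` forms a walk from `u` to `v`. -/
def IsWalk : G.V → G.V → List G.Dart → Prop
  | u, v, [] => u = v
  | u, v, d :: ds => G.dartSrc d = u ∧ IsWalk (G.dartTgt d) v ds

/-- The internal vertices of a walk. -/
def interiorVerts (l : List G.Dart) : List G.V :=
  (l.map G.dartTgt).dropLast

end Multigraph
namespace Multigraph

/-! ### Embeddings -/

/-- An embedding of a (possibly disconnected) graph `G` into `N`: every vertex of
`G` is mapped to a vertex of `N` and every edge of `G` is mapped to a nonempty
trail of `N` between the images of its endpoints; distinct edges of `G` use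
pairwise disjoint sets of edges of `N` (so the components of `G` are mapped to
subdivisions lying in pairwise edge-disjoint subgraphs of `N`), and labels are
preserved. -/
structure Emb (G N : Multigraph) where
  vMap : G.V → N.V
  path : G.E → List N.Dart
  walk_ok : ∀ e, N.IsWalk (vMap (G.fst e)) (vMap (G.snd e)) (path e)
  path_ne : ∀ e, path e ≠ []
  nodup : ∀ e, (path e).Nodup
  edge_inj : ∀ e e' : G.E, ∀ d ∈ path e, ∀ d' ∈ path e', d.1 = d'.1 → e = e' ∧ d = d'
  interior_nodup : ∀ e, (N.interiorVerts (path e)).Nodup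
  interior_disj : ∀ e e', e ≠ e' → ∀ w ∈ N.interiorVerts (path e), w ∉ N.interiorVerts (path e')
  label_ok : ∀ v i, G.label v = some i → N.label (vMap v) = some i

/-- A plain embedding, witnessing that `N` displays `G`: additionally the vertex
map is injective and the subdivision vertices (interior vertices of the paths)
are fresh. -/
structure PlainEmb (G N : Multigraph) extends Emb G N where
  vMap_inj : Function.Injective vMap
  interior_fresh : ∀ e, ∀ w ∈ N.interiorVerts (path e), ∀ v, vMap v ≠ w

/-- `N` displays `G`: a subdivision of `G` is a subgraph of `N`. -/
def Displays (N G : Multigraph) : Prop := Nonempty (PlainEmb G N)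

/-- An agreement embedding of `G` into `N`: an embedding such that
(i) all edges of `N` are covered,
(ii) at most two vertices of `G` are mapped to the same vertex of `N`, and if two
distinct vertices share an image, one of them is a sprout and the other a
labelled isolated vertex,
(iii) every labelled vertex of `N` is the image of exactly one vertex of `G`,
which carries the same label, and
(iv) only sprouts may be mapped onto interior (subdivision) vertices of paths. -/
structure AgrEmb (G N : Multigraph) extends Emb G N where
  covers : ∀ f : N.E, ∃ e, ∃ d ∈ path e, d.1 = f
  two_to_one : ∀ u v, u ≠ v → vMap u = vMap v →
    (G.IsSprout u ∧ G.IsLabelledIsolated v) ∨ (G.IsSprout v ∧ G.IsLabelledIsolated u)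
  at_most_two : ∀ u v w, u ≠ v → v ≠ w → u ≠ w →
    ¬ (vMap u = vMap v ∧ vMap v = vMap w)
  labels_unique : ∀ x : N.V, ∀ i, N.label x = some i →
    ∃! v : G.V, G.label v = some i ∧ vMap v = x
  interior_fresh : ∀ e, ∀ w ∈ N.interiorVerts (path e), ∀ v, ¬ G.IsSprout v → vMap v ≠ w

/-! ### Isomorphisms -/

/-- A label-preserving isomorphism of multigraphs. -/
structure Iso (G H : Multigraph) where
  vEquiv : G.V ≃ H.V
  eEquiv : G.E ≃ H.E
  ends_ok : ∀ e,
    (H.fst (eEquiv e) = vEquiv (G.fst e) ∧ H.snd (eEquiv e) = vEquiv (G.snd e)) ∨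
    (H.fst (eEquiv e) = vEquiv (G.snd e) ∧ H.snd (eEquiv e) = vEquiv (G.fst e))
  label_ok : ∀ v, H.label (vEquiv v) = G.label v

/-! ### Components -/

variable (G : Multigraph)

/-- The connected components of `G`. -/
def Comp : Type := Quot G.Adj

/-- The component of a vertex. -/
def comp (v : G.V) : G.Comp := Quot.mk _ v

def CompHasSprout (c : G.Comp) : Prop := ∃ v, G.comp v = c ∧ G.IsSprout v

/-- The number of components that contain no sprout (agreement subgraphs). -/
noncomputable def agreementCompCount : ℕ := {c : G.Comp | ¬ G.CompHasSprout c}.ncard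

/-- A disagreement edge: a single edge both of whose endpoints are sprouts
(hence its component consists of this edge alone, on two unlabelled vertices). -/
def IsDisEdge (e : G.E) : Prop := G.IsSprout (G.fst e) ∧ G.IsSprout (G.snd e)

noncomputable def disEdgeCount : ℕ := {e : G.E | G.IsDisEdge e}.ncard

noncomputable def sproutCount : ℕ := {v : G.V | G.IsSprout v}.ncard

def IsSproutFree : Prop := ∀ v, ¬ G.IsSprout v

/-- The subgraph of a component `c` of `G`. -/
def compSubgraph (c : G.Comp) : Multigraph where
  V := {v : G.V // G.comp v = c}
  E := {e : G.E // G.comp (G.fst e) = c}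
  finV := Subtype.finite
  finE := Subtype.finite
  fst := fun e => ⟨G.fst e.1, e.2⟩
  snd := fun e => ⟨G.snd e.1, by
    have : G.comp (G.fst e.1) = G.comp (G.snd e.1) := Quot.sound ⟨e.1, Or.inl ⟨rfl, rfl⟩⟩
    rw [← this]; exact e.2⟩
  label := fun v => G.label v.1

/-- A (connected multigraph that is a) tree: connected and every edge is a cut-edge. -/
def IsTreeGraph : Prop := G.Connected ∧ ∀ e, G.IsCutEdge e

/-- Delete a set of disagreement edges together with their endpoints. -/
def deleteDisEdges (A : Set G.E) : Multigraph where
  V := {v : G.V // ∀ e ∈ A, G.fst e ≠ v ∧ G.snd e ≠ v}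
  E := {e : G.E // e ∉ A ∧ ∀ e' ∈ A,
    (G.fst e' ≠ G.fst e ∧ G.snd e' ≠ G.fst e) ∧ (G.fst e' ≠ G.snd e ∧ G.snd e' ≠ G.snd e)}
  finV := Subtype.finite
  finE := Subtype.finite
  fst := fun e => ⟨G.fst e.1, fun e' he' => (e.2.2 e' he').1⟩
  snd := fun e => ⟨G.snd e.1, fun e' he' => (e.2.2 e' he').2⟩
  label := fun v => G.label v.1

end Multigraph

/-! An agreement embedding `φ : G → H` followed by `ψ : H → N` composes by sending each edge
of `G` along its path in `H` and replacing every dart of that path by its path in `N`. The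
composite stays an agreement embedding because agreement embeddings reflect sprouts and
labelled isolated vertices (a non-sprout is never sent onto a sprout), so `ψ` is injective on
the non-sprouts met by the paths of `φ`; and a vertex of `H` hit twice by `φ` is labelled and
not isolated, so `ψ` identifies it with no other vertex. -/

namespace Multigraph

variable {G H N : Multigraph}

def flipDart (G : Multigraph) (d : G.Dart) : G.Dart := (d.1, !d.2)

@[simp] lemma dartSrc_flipDart (d : G.Dart) : G.dartSrc (G.flipDart d) = G.dartTgt d := by
  obtain ⟨f, b⟩ := d; cases b <;> rfl

@[simp] lemma dartTgt_flipDart (d : G.Dart) : G.dartTgt (G.flipDart d) = G.dartSrc d := by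
  obtain ⟨f, b⟩ := d; cases b <;> rfl

lemma flipDart_injective : Function.Injective G.flipDart := by
  rintro ⟨f, b⟩ ⟨f', b'⟩ h
  simpa [flipDart] using h

lemma flipDart_ne (d : G.Dart) : G.flipDart d ≠ d := by
  obtain ⟨f, b⟩ := d; cases b <;> simp [flipDart]

lemma interiorVerts_cons_cons (d d' : G.Dart) (ds : List G.Dart) :
    G.interiorVerts (d :: d' :: ds) = G.dartTgt d :: G.interiorVerts (d' :: ds) := rfl

lemma IsWalk.append {u v w : G.V} {l l' : List G.Dart} (h : G.IsWalk u v l)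
    (h' : G.IsWalk v w l') : G.IsWalk u w (l ++ l') := by
  induction l generalizing u with
  | nil => exact (h : u = v) ▸ h'
  | cons d ds ih => exact ⟨h.1, ih h.2⟩

lemma IsWalk.reverse {u v : G.V} {l : List G.Dart} (h : G.IsWalk u v l) :
    G.IsWalk v u (l.map G.flipDart).reverse := by
  induction l generalizing u with
  | nil => exact (h : u = v).symm
  | cons d ds ih =>
    have hd : G.IsWalk (G.dartTgt d) u [G.flipDart d] := ⟨by simp, by simpa [IsWalk] using h.1⟩
    simpa using (ih h.2).append hd

lemma IsWalk.dartSrc_head {u v : G.V} {l : List G.Dart} (h : G.IsWalk u v l) (hl : l ≠ []) :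
    G.dartSrc (l.head hl) = u := by
  obtain ⟨d, ds, rfl⟩ := List.exists_cons_of_ne_nil hl
  exact h.1

lemma IsWalk.map_dartSrc_and_map_dartTgt {u v : G.V} {l : List G.Dart} (h : G.IsWalk u v l)
    (hl : l ≠ []) :
    l.map G.dartSrc = u :: G.interiorVerts l ∧ l.map G.dartTgt = G.interiorVerts l ++ [v] := by
  induction l generalizing u with
  | nil => exact absurd rfl hl
  | cons d ds ih =>
    obtain ⟨hsrc, htl⟩ := h
    cases ds with
    | nil => exact ⟨by simp [hsrc, interiorVerts], congrArg ([·]) htl⟩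
    | cons d' ds' =>
      obtain ⟨ih₁, ih₂⟩ := ih htl (List.cons_ne_nil _ _)
      rw [interiorVerts_cons_cons]
      exact ⟨by rw [List.map_cons, ih₁, hsrc], by rw [List.map_cons, ih₂]; rfl⟩

lemma IsWalk.map_dartSrc {u v : G.V} {l : List G.Dart} (h : G.IsWalk u v l) (hl : l ≠ []) :
    l.map G.dartSrc = u :: G.interiorVerts l :=
  (h.map_dartSrc_and_map_dartTgt hl).1

lemma IsWalk.map_dartTgt {u v : G.V} {l : List G.Dart} (h : G.IsWalk u v l) (hl : l ≠ []) :
    l.map G.dartTgt = G.interiorVerts l ++ [v] :=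
  (h.map_dartSrc_and_map_dartTgt hl).2

lemma IsWalk.interiorVerts_reverse {u v : G.V} {l : List G.Dart} (h : G.IsWalk u v l) :
    G.interiorVerts (l.map G.flipDart).reverse = (G.interiorVerts l).reverse := by
  rcases eq_or_ne l [] with rfl | hl
  · rfl
  · have hsrc : G.dartTgt ∘ G.flipDart = G.dartSrc := funext dartTgt_flipDart
    rw [interiorVerts, List.map_reverse, List.map_map, hsrc, h.map_dartSrc hl,
      List.reverse_cons, List.dropLast_concat]

lemma IsWalk.interiorVerts_append {u v : G.V} {l l' : List G.Dart} (h : G.IsWalk u v l)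
    (hl : l ≠ []) (hl' : l' ≠ []) :
    G.interiorVerts (l ++ l') = G.interiorVerts l ++ v :: G.interiorVerts l' := by
  rw [interiorVerts, List.map_append, List.dropLast_append_of_ne_nil (by simpa using hl'),
    h.map_dartTgt hl, ← interiorVerts, List.append_assoc, List.singleton_append]

lemma degree_eq_ncard_dartSrc (u : G.V) :
    G.degree u = {d : G.Dart | G.dartSrc d = u}.ncard := by
  have hsplit : {d : G.Dart | G.dartSrc d = u} =
      (·, true) '' {e | G.fst e = u} ∪ (·, false) '' {e | G.snd e = u} := by
    ext ⟨e, b⟩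
    cases b <;> simp [dartSrc]
  rw [hsplit, Set.ncard_union_eq (by simp [Set.disjoint_left]),
    Set.ncard_image_of_injective _ (fun _ _ h => (Prod.ext_iff.1 h).1),
    Set.ncard_image_of_injective _ (fun _ _ h => (Prod.ext_iff.1 h).1)]
  rfl

lemma degree_ne_zero_iff {u : G.V} : G.degree u ≠ 0 ↔ ∃ d, G.dartSrc d = u := by
  rw [degree_eq_ncard_dartSrc, Ne, Set.ncard_eq_zero, ← Ne, ← Set.nonempty_iff_ne_empty]
  rfl

lemma one_lt_degree_iff {u : G.V} :
    1 < G.degree u ↔ ∃ d d', G.dartSrc d = u ∧ G.dartSrc d' = u ∧ d ≠ d' := by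
  rw [degree_eq_ncard_dartSrc, Set.one_lt_ncard_iff]
  rfl

lemma not_isSprout_of_one_lt_degree {u : G.V} (h : 1 < G.degree u) : ¬ G.IsSprout u :=
  fun hu => h.ne' hu.2

namespace Emb

variable (φ : Emb G H)

def dartPath (d : G.Dart) : List H.Dart :=
  if d.2 then φ.path d.1 else ((φ.path d.1).map H.flipDart).reverse

lemma dartPath_ne_nil (d : G.Dart) : φ.dartPath d ≠ [] := by
  unfold dartPath
  split
  · exact φ.path_ne d.1
  · simpa using φ.path_ne d.1

lemma isWalk_dartPath (d : G.Dart) :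
    H.IsWalk (φ.vMap (G.dartSrc d)) (φ.vMap (G.dartTgt d)) (φ.dartPath d) := by
  obtain ⟨f, b⟩ := d
  cases b
  · exact (φ.walk_ok f).reverse
  · exact φ.walk_ok f

lemma nodup_dartPath (d : G.Dart) : (φ.dartPath d).Nodup := by
  unfold dartPath
  split
  · exact φ.nodup d.1
  · exact List.nodup_reverse.2 ((φ.nodup d.1).map flipDart_injective)

lemma perm_interiorVerts_dartPath (d : G.Dart) :
    (H.interiorVerts (φ.dartPath d)).Perm (H.interiorVerts (φ.path d.1)) := by
  unfold dartPath
  split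
  · rfl
  · rw [(φ.walk_ok d.1).interiorVerts_reverse]
    exact List.reverse_perm _

-- `x.2 == d.2` undoes the reversal of the path when `d` points backwards.
lemma mem_dartPath {d : G.Dart} {x : H.Dart} :
    x ∈ φ.dartPath d ↔ (x.1, x.2 == d.2) ∈ φ.path d.1 := by
  obtain ⟨f, b⟩ := d
  obtain ⟨g, c⟩ := x
  cases b
  · show (g, c) ∈ ((φ.path f).map H.flipDart).reverse ↔ (g, c == false) ∈ φ.path f
    rw [List.mem_reverse, show ((g, c) : H.Dart) = H.flipDart (g, !c) by simp [flipDart],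
      List.mem_map_of_injective flipDart_injective]
    simp
  · simp [dartPath]

lemma dartPath_edge_inj {d d' : G.Dart} {x x' : H.Dart} (hx : x ∈ φ.dartPath d)
    (hx' : x' ∈ φ.dartPath d') (h : x.1 = x'.1) :
    d.1 = d'.1 ∧ (x.2 = x'.2 ↔ d.2 = d'.2) := by
  obtain ⟨hd, hx⟩ := φ.edge_inj _ _ _ (φ.mem_dartPath.1 hx) _ (φ.mem_dartPath.1 hx') h
  refine ⟨hd, ?_⟩
  have hb : (x.2 == d.2) = (x'.2 == d'.2) := (Prod.ext_iff.1 hx).2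
  revert hb
  cases x.2 <;> cases x'.2 <;> cases d.2 <;> cases d'.2 <;> decide

lemma exists_mem_dartPath {d : G.Dart} {y : H.Dart} (hy : y ∈ φ.path d.1) :
    ∃ x ∈ φ.dartPath d, x.1 = y.1 := by
  refine ⟨(y.1, y.2 == d.2), φ.mem_dartPath.2 ?_, rfl⟩
  obtain ⟨g, c⟩ := y
  cases c <;> cases d.2 <;> simpa using hy

lemma head_dartPath_injective {d d' : G.Dart}
    (h : (φ.dartPath d).head (φ.dartPath_ne_nil d) =
      (φ.dartPath d').head (φ.dartPath_ne_nil d')) : d = d' := by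
  obtain ⟨h₁, h₂⟩ :=
    φ.dartPath_edge_inj (List.head_mem _) (List.head_mem _) (congrArg Prod.fst h)
  exact Prod.ext h₁ (h₂.1 (congrArg Prod.snd h))

lemma degree_vMap_ne_zero {u : G.V} (h : G.degree u ≠ 0) : H.degree (φ.vMap u) ≠ 0 := by
  obtain ⟨d, rfl⟩ := degree_ne_zero_iff.1 h
  exact degree_ne_zero_iff.2 ⟨_, (φ.isWalk_dartPath d).dartSrc_head (φ.dartPath_ne_nil d)⟩

lemma one_lt_degree_vMap {u : G.V} (h : 1 < G.degree u) : 1 < H.degree (φ.vMap u) := by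
  obtain ⟨d, d', rfl, hd', hne⟩ := one_lt_degree_iff.1 h
  refine one_lt_degree_iff.2 ⟨_, _, (φ.isWalk_dartPath d).dartSrc_head (φ.dartPath_ne_nil d),
    ?_, fun hh => hne (φ.head_dartPath_injective hh)⟩
  rw [← hd']
  exact (φ.isWalk_dartPath d').dartSrc_head (φ.dartPath_ne_nil d')

/-- A subdivision vertex is entered and left by two different darts of its path, and these
lie on different edges since the path uses each edge once. -/
lemma one_lt_degree_of_mem_interiorVerts {e : G.E} {s : H.V}
    (hs : s ∈ H.interiorVerts (φ.path e)) : 1 < H.degree s := by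
  have hsrc : s ∈ (φ.path e).map H.dartSrc := by
    rw [(φ.walk_ok e).map_dartSrc (φ.path_ne e)]
    exact List.mem_cons_of_mem _ hs
  have htgt : s ∈ (φ.path e).map H.dartTgt := by
    rw [(φ.walk_ok e).map_dartTgt (φ.path_ne e)]
    exact List.mem_append_left _ hs
  obtain ⟨d', hd', hd's⟩ := List.mem_map.1 hsrc
  obtain ⟨d, hd, hds⟩ := List.mem_map.1 htgt
  refine one_lt_degree_iff.2 ⟨H.flipDart d, d', by simpa using hds, hd's, fun h => ?_⟩
  have hdd : d = d' :=
    (φ.edge_inj e e d hd d' hd' (congrArg Prod.fst h : (H.flipDart d).1 = d'.1)).2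
  exact H.flipDart_ne d (h.trans hdd.symm)

lemma not_isSprout_of_mem_interiorVerts {e : G.E} {s : H.V}
    (hs : s ∈ H.interiorVerts (φ.path e)) : ¬ H.IsSprout s :=
  not_isSprout_of_one_lt_degree (φ.one_lt_degree_of_mem_interiorVerts hs)

lemma isWalk_flatMap_dartPath {a b : G.V} {l : List G.Dart} (h : G.IsWalk a b l) :
    H.IsWalk (φ.vMap a) (φ.vMap b) (l.flatMap φ.dartPath) := by
  induction l generalizing a with
  | nil => exact congrArg φ.vMap h
  | cons d ds ih => exact (h.1 ▸ φ.isWalk_dartPath d).append (ih h.2)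

lemma flatMap_dartPath_ne_nil {l : List G.Dart} (hl : l ≠ []) : l.flatMap φ.dartPath ≠ [] := by
  obtain ⟨d, ds, rfl⟩ := List.exists_cons_of_ne_nil hl
  rw [List.flatMap_cons]
  exact fun h => φ.dartPath_ne_nil d (List.append_eq_nil_iff.1 h).1

lemma perm_interiorVerts_flatMap_dartPath (l : List G.Dart) :
    (H.interiorVerts (l.flatMap φ.dartPath)).Perm
      (l.flatMap (fun d => H.interiorVerts (φ.path d.1)) ++ (G.interiorVerts l).map φ.vMap) := by
  induction l with
  | nil => rfl
  | cons d ds ih =>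
    rcases eq_or_ne ds [] with rfl | hds
    · simpa [interiorVerts] using φ.perm_interiorVerts_dartPath d
    · obtain ⟨d', ds', rfl⟩ := List.exists_cons_of_ne_nil hds
      conv_lhs => rw [List.flatMap_cons, (φ.isWalk_dartPath d).interiorVerts_append
        (φ.dartPath_ne_nil d) (φ.flatMap_dartPath_ne_nil hds)]
      conv_rhs => rw [List.flatMap_cons, interiorVerts_cons_cons, List.map_cons, List.append_assoc]
      exact (φ.perm_interiorVerts_dartPath d).append ((ih.cons _).trans List.perm_middle.symm)

lemma mem_interiorVerts_flatMap_dartPath {l : List G.Dart} {w : H.V} :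
    w ∈ H.interiorVerts (l.flatMap φ.dartPath) ↔
      (∃ d ∈ l, w ∈ H.interiorVerts (φ.path d.1)) ∨
        ∃ u ∈ G.interiorVerts l, φ.vMap u = w := by
  rw [(φ.perm_interiorVerts_flatMap_dartPath l).mem_iff, List.mem_append, List.mem_flatMap,
    List.mem_map]

end Emb

namespace AgrEmb

variable (φ : AgrEmb G H)

lemma isSprout_and_isLabelledIsolated_of_vMap_eq {x y : G.V} (hxy : x ≠ y)
    (h : φ.vMap x = φ.vMap y) (hx : ¬ G.IsSprout x) : G.IsSprout y ∧ G.IsLabelledIsolated x :=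
  (φ.two_to_one x y hxy h).resolve_left fun h' => hx h'.1

lemma eq_of_vMap_eq {x y : G.V} (hx : ¬ G.IsSprout x) (hy : ¬ G.IsSprout y)
    (h : φ.vMap x = φ.vMap y) : x = y := by
  by_contra hxy
  exact hy (φ.isSprout_and_isLabelledIsolated_of_vMap_eq hxy h hx).1

lemma exists_of_degree_ne_zero {s : H.V} (hs : H.degree s ≠ 0) :
    (∃ u, G.degree u ≠ 0 ∧ φ.vMap u = s) ∨ ∃ e, s ∈ H.interiorVerts (φ.path e) := by
  obtain ⟨⟨f, b⟩, rfl⟩ := degree_ne_zero_iff.1 hs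
  obtain ⟨e, ⟨g, c⟩, hx, rfl⟩ := φ.covers f
  have hends : H.dartSrc (g, b) ∈ (φ.path e).map H.dartSrc ∨
      H.dartSrc (g, b) ∈ (φ.path e).map H.dartTgt := by
    cases b <;> cases c
    exacts [.inl (List.mem_map_of_mem hx), .inr (List.mem_map_of_mem hx),
      .inr (List.mem_map_of_mem hx), .inl (List.mem_map_of_mem hx)]
  rw [(φ.walk_ok e).map_dartSrc (φ.path_ne e), (φ.walk_ok e).map_dartTgt (φ.path_ne e)] at hends
  rcases hends with hs | hs
  · rcases List.mem_cons.1 hs with hs | hs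
    · exact .inl ⟨_, degree_ne_zero_iff.2 ⟨(e, true), rfl⟩, hs.symm⟩
    · exact .inr ⟨e, hs⟩
  · rcases List.mem_append.1 hs with hs | hs
    · exact .inr ⟨e, hs⟩
    · exact .inl
        ⟨_, degree_ne_zero_iff.2 ⟨(e, false), rfl⟩, (List.mem_singleton.1 hs).symm⟩

lemma isSprout_of_isSprout_vMap {v : G.V} (hv : H.IsSprout (φ.vMap v)) : G.IsSprout v := by
  by_contra hnv
  have hvl : G.label v = none := by
    cases hl : G.label v with
    | none => rfl
    | some i => simpa [hv.1] using φ.label_ok v i hl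
  rcases φ.exists_of_degree_ne_zero (hv.2 ▸ one_ne_zero) with ⟨u, hu, huv⟩ | ⟨e, he⟩
  · rcases eq_or_ne v u with rfl | hvu
    · have : 1 < G.degree v := by
        have : G.degree v ≠ 1 := fun h => hnv ⟨hvl, h⟩
        omega
      exact (φ.one_lt_degree_vMap this).ne' hv.2
    · have := (φ.isSprout_and_isLabelledIsolated_of_vMap_eq hvu huv.symm hnv).2.1
      simp [hvl] at this
  · exact φ.not_isSprout_of_mem_interiorVerts he hv

lemma isLabelledIsolated_of_isLabelledIsolated_vMap {v : G.V}
    (hv : H.IsLabelledIsolated (φ.vMap v)) : G.IsLabelledIsolated v := by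
  have hdeg : G.degree v = 0 := not_not.1 fun h => φ.degree_vMap_ne_zero h hv.2
  refine ⟨?_, hdeg⟩
  obtain ⟨i, hi⟩ := Option.isSome_iff_exists.1 hv.1
  obtain ⟨w, ⟨hwl, hwv⟩, -⟩ := φ.labels_unique _ i hi
  rcases eq_or_ne w v with rfl | hwv'
  · simp [hwl]
  · have hw : ¬ G.IsSprout w := fun h => by simp [h.1] at hwl
    have := (φ.isSprout_and_isLabelledIsolated_of_vMap_eq hwv' hwv hw).1.2
    omega

lemma not_isSprout_and_not_isLabelledIsolated_of_vMap_eq {u v : G.V} (huv : u ≠ v)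
    (h : φ.vMap u = φ.vMap v) :
    ¬ H.IsSprout (φ.vMap u) ∧ ¬ H.IsLabelledIsolated (φ.vMap u) := by
  obtain ⟨s, t, hs, ht, hsu, htu⟩ : ∃ s t, G.IsSprout s ∧ G.IsLabelledIsolated t ∧
      φ.vMap s = φ.vMap u ∧ φ.vMap t = φ.vMap u := by
    rcases φ.two_to_one u v huv h with ⟨hu, hv⟩ | ⟨hv, hu⟩
    · exact ⟨u, v, hu, hv, rfl, h.symm⟩
    · exact ⟨v, u, hv, hu, h.symm, rfl⟩
  obtain ⟨i, hi⟩ := Option.isSome_iff_exists.1 ht.1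
  have hlab : H.label (φ.vMap u) = some i := htu ▸ φ.label_ok t i hi
  have hdeg : H.degree (φ.vMap u) ≠ 0 := hsu ▸ φ.degree_vMap_ne_zero (by simp [hs.2])
  exact ⟨fun h' => by simpa [hlab] using h'.1, fun h' => hdeg h'.2⟩

lemma vMap_eq_of_comp_vMap_eq (ψ : AgrEmb H N) {x y : G.V} {c : H.V} (hxy : x ≠ y)
    (hφ : φ.vMap x = φ.vMap y) (hψ : ψ.vMap (φ.vMap x) = ψ.vMap c) : φ.vMap x = c := by
  obtain ⟨hs, hl⟩ := φ.not_isSprout_and_not_isLabelledIsolated_of_vMap_eq hxy hφ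
  by_contra hc
  exact hl (ψ.isSprout_and_isLabelledIsolated_of_vMap_eq hc hψ hs).2

end AgrEmb

def Emb.comp (φ : Emb G H) (ψ : AgrEmb H N) : Emb G N where
  vMap v := ψ.vMap (φ.vMap v)
  path e := (φ.path e).flatMap ψ.dartPath
  walk_ok e := ψ.isWalk_flatMap_dartPath (φ.walk_ok e)
  path_ne e := ψ.flatMap_dartPath_ne_nil (φ.path_ne e)
  nodup e := by
    refine List.nodup_flatMap.2 ⟨fun d _ => ψ.nodup_dartPath d, ?_⟩
    refine (φ.nodup e).pairwise_of_forall_ne fun d _ d' _ hne => List.disjoint_left.2 ?_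
    intro x hx hx'
    obtain ⟨h₁, h₂⟩ := ψ.dartPath_edge_inj hx hx' rfl
    exact hne (Prod.ext h₁ (h₂.1 rfl))
  edge_inj e e' x hx x' hx' h := by
    obtain ⟨d, hd, hxd⟩ := List.mem_flatMap.1 hx
    obtain ⟨d', hd', hxd'⟩ := List.mem_flatMap.1 hx'
    obtain ⟨h₁, h₂⟩ := ψ.dartPath_edge_inj hxd hxd' h
    obtain ⟨rfl, rfl⟩ := φ.edge_inj e e' d hd d' hd' h₁
    exact ⟨rfl, Prod.ext h (h₂.2 rfl)⟩
  interior_nodup e := by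
    refine (ψ.perm_interiorVerts_flatMap_dartPath _).nodup_iff.2
      (List.nodup_append.2 ⟨?_, ?_, ?_⟩)
    · refine List.nodup_flatMap.2 ⟨fun d _ => ψ.interior_nodup d.1, ?_⟩
      refine (φ.nodup e).pairwise_of_forall_ne fun d hd d' hd' hne => List.disjoint_left.2 ?_
      exact ψ.interior_disj _ _ fun h => hne (φ.edge_inj e e d hd d' hd' h).2
    · exact (φ.interior_nodup e).map_on fun u hu u' hu' =>
        ψ.eq_of_vMap_eq (φ.not_isSprout_of_mem_interiorVerts hu)
          (φ.not_isSprout_of_mem_interiorVerts hu')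
    · rintro w hw _ hw' rfl
      obtain ⟨d, -, hw⟩ := List.mem_flatMap.1 hw
      obtain ⟨u, hu, rfl⟩ := List.mem_map.1 hw'
      exact ψ.interior_fresh d.1 _ hw u (φ.not_isSprout_of_mem_interiorVerts hu) rfl
  interior_disj e e' hne w hw hw' := by
    rw [ψ.mem_interiorVerts_flatMap_dartPath] at hw hw'
    rcases hw with ⟨d, hd, hw⟩ | ⟨u, hu, rfl⟩ <;>
      rcases hw' with ⟨d', hd', hw'⟩ | ⟨u', hu', hw'⟩
    · exact ψ.interior_disj d.1 d'.1 (fun h => hne (φ.edge_inj e e' d hd d' hd' h).1) w hw hw'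
    · exact ψ.interior_fresh d.1 w hw u' (φ.not_isSprout_of_mem_interiorVerts hu') hw'
    · exact ψ.interior_fresh d'.1 _ hw' u (φ.not_isSprout_of_mem_interiorVerts hu) rfl
    · refine φ.interior_disj e e' hne u hu (ψ.eq_of_vMap_eq ?_ ?_ hw' ▸ hu')
      exacts [φ.not_isSprout_of_mem_interiorVerts hu', φ.not_isSprout_of_mem_interiorVerts hu]
  label_ok v i h := ψ.label_ok _ i (φ.label_ok v i h)

def AgrEmb.comp (φ : AgrEmb G H) (ψ : AgrEmb H N) : AgrEmb G N where
  toEmb := φ.toEmb.comp ψ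
  covers f := by
    obtain ⟨f', y, hy, rfl⟩ := ψ.covers f
    obtain ⟨e, d, hd, rfl⟩ := φ.covers f'
    obtain ⟨x, hx, hxy⟩ := ψ.exists_mem_dartPath (d := d) hy
    exact ⟨e, x, List.mem_flatMap.2 ⟨d, hd, hx⟩, hxy⟩
  two_to_one u v huv h := by
    by_cases hφ : φ.vMap u = φ.vMap v
    · exact φ.two_to_one u v huv hφ
    · exact (ψ.two_to_one _ _ hφ h).imp
        (.imp φ.isSprout_of_isSprout_vMap φ.isLabelledIsolated_of_isLabelledIsolated_vMap)
        (.imp φ.isSprout_of_isSprout_vMap φ.isLabelledIsolated_of_isLabelledIsolated_vMap)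
  at_most_two u v w huv hvw huw := by
    rintro ⟨h₁, h₂⟩
    by_cases hab : φ.vMap u = φ.vMap v
    · refine φ.at_most_two u v w huv hvw huw ⟨hab, ?_⟩
      exact hab ▸ φ.vMap_eq_of_comp_vMap_eq ψ huv hab (h₁.trans h₂)
    by_cases hbc : φ.vMap v = φ.vMap w
    · exact hab (φ.vMap_eq_of_comp_vMap_eq ψ hvw hbc h₁.symm).symm
    by_cases hac : φ.vMap u = φ.vMap w
    · exact hab (φ.vMap_eq_of_comp_vMap_eq ψ huw hac h₁)
    exact ψ.at_most_two _ _ _ hab hbc hac ⟨h₁, h₂⟩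
  labels_unique x i hx := by
    obtain ⟨y, ⟨hyl, rfl⟩, hyu⟩ := ψ.labels_unique x i hx
    obtain ⟨v, ⟨hvl, rfl⟩, hvu⟩ := φ.labels_unique y i hyl
    refine ⟨v, ⟨hvl, rfl⟩, fun v' ⟨hv'l, hv'⟩ => hvu v' ⟨hv'l, ?_⟩⟩
    exact hyu _ ⟨φ.label_ok v' i hv'l, hv'⟩
  interior_fresh e w hw v hv := by
    rcases ψ.mem_interiorVerts_flatMap_dartPath.1 hw with ⟨d, -, hw⟩ | ⟨u, hu, rfl⟩
    · exact ψ.interior_fresh d.1 w hw _ (mt φ.isSprout_of_isSprout_vMap hv)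
    · exact fun h => φ.interior_fresh e u hu v hv (ψ.eq_of_vMap_eq
        (mt φ.isSprout_of_isSprout_vMap hv) (φ.not_isSprout_of_mem_interiorVerts hu) h)

end Multigraph

open Multigraph in
/-- Having an agreement embedding is a transitive property. -/
theorem agreement_embedding_transitive (G H N : Multigraph)
    (h₁ : Nonempty (AgrEmb G H)) (h₂ : Nonempty (AgrEmb H N)) :
    Nonempty (AgrEmb G N) :=
  let ⟨φ⟩ := h₁
  let ⟨ψ⟩ := h₂
  ⟨φ.comp ψ⟩
end

section
/- If an agreement graph G of two phylogenetic networks N and N' contains m agreement subgraphs, then G contains at least m-1 disagreement edges. -/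
open Relation

namespace Multigraph

variable (G : Multigraph)

/-! ### Phylogenetic networks -/

/-- The labels of `G` are exactly `{0, …, n-1}`, bijectively placed on the
vertices satisfying `P` (e.g. the leaves). -/
def LabelsExactly (n : ℕ) (P : G.V → Prop) : Prop :=
  (∀ v, (G.label v).isSome ↔ P v) ∧
  (∀ v i, G.label v = some i → i < n) ∧
  (∀ i, i < n → ∃! v, G.label v = some i)

/-- Properness: every cut-edge separates two labelled leaves, i.e. lies on a
path connecting two labelled vertices. -/
def IsProper : Prop :=
  ∀ e, G.IsCutEdge e →
    (∃ u, (G.deleteEdges {e}).Reach (G.fst e) u ∧ (G.label u).isSome) ∧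
    (∃ u, (G.deleteEdges {e}).Reach (G.snd e) u ∧ (G.label u).isSome)

/-- An unrooted binary proper phylogenetic network on `X = {0, …, n-1}`:
a connected multigraph whose leaves are bijectively labelled with `X`, all of
whose non-leaf vertices have degree three, and which is proper. -/
def IsPhyloNet (n : ℕ) : Prop :=
  G.Connected ∧ (∀ v, G.degree v = 1 ∨ G.degree v = 3) ∧
    G.LabelsExactly n (fun v => G.degree v = 1) ∧ G.IsProper

/-- An unrooted binary phylogenetic tree on `X = {0, …, n-1}`. -/
def IsPhyloTree (n : ℕ) : Prop := G.IsPhyloNet n ∧ G.IsTreeGraph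

/-- A replug network on `X = {0, …, n-1}`: leaves and labelled singletons are
bijectively labelled with `X`, all non-leaf vertices have degree three; it may
be disconnected, improper, or contain loops. -/
def IsReplugNet (n : ℕ) : Prop :=
  (∀ v, G.degree v ≤ 1 ∨ G.degree v = 3) ∧ G.LabelsExactly n (fun v => G.degree v ≤ 1)

/-! ### Rearrangement operations -/

/-- `G` together with one extra disjoint edge on two new unlabelled vertices. -/
def addDisEdge : Multigraph where
  V := G.V ⊕ Bool
  E := G.E ⊕ Unit
  finV := inferInstance
  finE := inferInstance
  fst := fun e => match e with | .inl e => .inl (G.fst e) | .inr _ => .inr true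
  snd := fun e => match e with | .inl e => .inl (G.snd e) | .inr _ => .inr false
  label := fun v => match v with | .inl v => G.label v | .inr _ => none

/-- `N` is obtained from `S` by adding a single new edge (whose endpoints
subdivide edges of `S` or are attached to labelled singletons of `S`): the graph
`S` plus one disagreement edge has an agreement embedding into `N` in which the
new edge is mapped to a single edge of `N`. -/
def AddsEdge (S N : Multigraph) : Prop :=
  ∃ h : AgrEmb S.addDisEdge N, (h.path (Sum.inr ())).length = 1

/-- A TBR⁰ operation: `N'` is obtained from `N` by removing an edge and
reconnecting (both networks are a common sprout-free graph `S` plus one edge). -/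
def TBR0 (N N' : Multigraph) : Prop :=
  ∃ S : Multigraph, S.IsSproutFree ∧ AddsEdge S N ∧ AddsEdge S N'

/-- A TBR⁺ operation adds an edge. -/
def TBRplus (N N' : Multigraph) : Prop := AddsEdge N N'

/-- A TBR⁻ operation removes an edge. -/
def TBRminus (N N' : Multigraph) : Prop := AddsEdge N' N

def TBRStep (N N' : Multigraph) : Prop := TBR0 N N' ∨ TBRplus N N' ∨ TBRminus N N'

/-- `N` is obtained from `S` (a graph with sprouts) by regrafting each sprout:
an agreement embedding in which each pendant edge of a sprout is mapped to a
single edge of `N`. -/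
def RegraftsInto (S N : Multigraph) : Prop :=
  ∃ h : AgrEmb S N, ∀ e, (S.IsSprout (S.fst e) ∨ S.IsSprout (S.snd e)) →
    (h.path e).length = 1

/-- A PR⁰ operation: `N'` is obtained from `N` by pruning an edge at one
endpoint and regrafting it (both networks are a common graph `S` with exactly
one sprout, with the sprout regrafted). -/
def PR0 (N N' : Multigraph) : Prop :=
  ∃ S : Multigraph, (∃! v, S.IsSprout v) ∧ RegraftsInto S N ∧ RegraftsInto S N'

def PRStep (N N' : Multigraph) : Prop := PR0 N N' ∨ TBRplus N N' ∨ TBRminus N N'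

/-- A replug operation is graph-theoretically a PR operation, performed in the
larger space of replug networks. -/
def ReplugStep (N N' : Multigraph) : Prop := PRStep N N'

/-! ### Distances -/

/-- `Chain P R k N N'`: a length-`k` sequence of `R`-steps from `N` to `N'`
all of whose members belong to the class `P`. -/
def Chain (P : Multigraph → Prop) (R : Multigraph → Multigraph → Prop) :
    ℕ → Multigraph → Multigraph → Prop
  | 0, N, N' => Nonempty (Iso N N')
  | k + 1, N, N' => ∃ M, P M ∧ R N M ∧ Chain P R k M N'

/-- The distance induced by steps `R` within the class `P`. -/
noncomputable def classDist (P : Multigraph → Prop)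
    (R : Multigraph → Multigraph → Prop) (N N' : Multigraph) : ℕ :=
  sInf {k | Chain P R k N N'}

/-- The TBR-distance on unrooted binary proper phylogenetic networks on `X`. -/
noncomputable def dTBR (n : ℕ) (N N' : Multigraph) : ℕ :=
  classDist (fun M => M.IsPhyloNet n) TBRStep N N'

/-- The PR-distance on unrooted binary proper phylogenetic networks on `X`. -/
noncomputable def dPR (n : ℕ) (N N' : Multigraph) : ℕ :=
  classDist (fun M => M.IsPhyloNet n) PRStep N N'

/-- The replug distance: distance under replug operations in the space of
replug networks. -/
noncomputable def dReplug (n : ℕ) (N N' : Multigraph) : ℕ :=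
  classDist (fun M => M.IsReplugNet n) ReplugStep N N'

/-! ### Agreement graphs -/

/-- `G` is an agreement graph of `N` and `N'` (in tiers `r ≤ r'`, `l = r' - r`):
every component of `G` is either sprout-free (an agreement subgraph) or a single
disagreement edge; `G` without `l` of its disagreement edges has an agreement
embedding into the lower-tier network, and `G` has an agreement embedding into
the higher-tier network.  (Stated symmetrically in `N` and `N'`.) -/
def IsAgreementGraph (N N' : Multigraph) : Prop :=
  (∀ v, G.IsSprout v → ∃ e, G.IsDisEdge e ∧ (G.fst e = v ∨ G.snd e = v)) ∧
  ∃ A A' : Set G.E,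
    (∀ e ∈ A, G.IsDisEdge e) ∧ (∀ e ∈ A', G.IsDisEdge e) ∧
    A.ncard = N'.tier - N.tier ∧ A'.ncard = N.tier - N'.tier ∧
    Nonempty (AgrEmb (G.deleteDisEdges A) N) ∧
    Nonempty (AgrEmb (G.deleteDisEdges A') N')

/-- A maximum agreement graph: an agreement graph with a minimal number of
disagreement edges. -/
def IsMAG (N N' : Multigraph) : Prop :=
  G.IsAgreementGraph N N' ∧
  ∀ G' : Multigraph, G'.IsAgreementGraph N N' → G.disEdgeCount ≤ G'.disEdgeCount

/-- The agreement distance: the number of disagreement edges of a maximum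
agreement graph. -/
noncomputable def dAD (N N' : Multigraph) : ℕ :=
  sInf {k | ∃ G : Multigraph, G.IsAgreementGraph N N' ∧ G.disEdgeCount = k}

/-! ### Endpoint agreement graphs -/

/-- `IsEAGWitness H D N N'`: `H` together with the designated set `D` of
disagreement edges (isolated single-edge components on two sprouts, as many as
the tier difference) is an endpoint agreement graph of `N` and `N'`: `H` minus
the disagreement edges has an agreement embedding into the lower-tier network
and `H` has one into the higher-tier network.  Unlike for agreement graphs, the
remaining components (the endpoint agreement subgraphs) may contain sprouts. -/
def IsEAGWitness (H : Multigraph) (D : Set H.E) (N N' : Multigraph) : Prop :=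
  (∀ e ∈ D, H.IsDisEdge e) ∧
  D.ncard = (N'.tier - N.tier) + (N.tier - N'.tier) ∧
  (N.tier ≤ N'.tier →
    Nonempty (AgrEmb (H.deleteDisEdges D) N) ∧ Nonempty (AgrEmb H N')) ∧
  (N'.tier ≤ N.tier →
    Nonempty (AgrEmb H N) ∧ Nonempty (AgrEmb (H.deleteDisEdges D) N'))

/-- The cost `s + l` of an endpoint agreement graph: the number `s` of sprouts
lying in agreement subgraphs plus the number `l` of disagreement edges. -/
noncomputable def EAGcost (H : Multigraph) (D : Set H.E) : ℕ :=
  {v : H.V | H.IsSprout v ∧ ∀ e ∈ D, H.fst e ≠ v ∧ H.snd e ≠ v}.ncard + D.ncard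

/-- A maximum endpoint agreement graph: an endpoint agreement graph with a
minimal number of sprouts. -/
def IsMEAG (H : Multigraph) (D : Set H.E) (N N' : Multigraph) : Prop :=
  H.IsEAGWitness D N N' ∧
  ∀ (H' : Multigraph) (D' : Set H'.E), H'.IsEAGWitness D' N N' →
    H.sproutCount ≤ H'.sproutCount

/-- The endpoint agreement distance `s + l`. -/
noncomputable def dEAD (N N' : Multigraph) : ℕ :=
  sInf {c | ∃ (H : Multigraph) (D : Set H.E), H.IsEAGWitness D N N' ∧ H.EAGcost D = c}

end Multigraph


/-! ### Auxiliary development for the lower bound -/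

section AuxDev

open Multigraph

/-- Walks of a fixed length for a relation. -/
private def Steps {α : Type*} (r : α → α → Prop) : ℕ → α → α → Prop
  | 0, a, b => a = b
  | n + 1, a, c => ∃ b, Steps r n a b ∧ r b c

private lemma exists_steps {α : Type*} {r : α → α → Prop} {a b : α}
    (h : Relation.ReflTransGen r a b) : ∃ n, Steps r n a b := by
  induction h with
  | refl => exact ⟨0, rfl⟩
  | tail _ h2 ih => obtain ⟨n, hn⟩ := ih; exact ⟨n + 1, _, hn, h2⟩

namespace Multigraph

instance (M : Multigraph) : Finite M.Comp :=
  Finite.of_surjective (Quot.mk _) (fun q => q.exists_rep)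

/-- A sprout has a unique incident edge. -/
private lemma sprout_unique_edge (M : Multigraph) {w : M.V} (hw : M.IsSprout w) {e1 e2 : M.E}
    (h1 : M.fst e1 = w ∨ M.snd e1 = w) (h2 : M.fst e2 = w ∨ M.snd e2 = w) : e1 = e2 := by
  have hdeg : {e : M.E | M.fst e = w}.ncard + {e : M.E | M.snd e = w}.ncard = 1 := hw.2
  have hA1 : {e : M.E | M.fst e = w}.ncard ≤ 1 := by omega
  have hA2 : {e : M.E | M.snd e = w}.ncard ≤ 1 := by omega
  rcases h1 with h1 | h1 <;> rcases h2 with h2 | h2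
  · exact (Set.ncard_le_one (Set.toFinite _)).mp hA1 e1 h1 e2 h2
  · exfalso
    have p1 : 0 < {e : M.E | M.fst e = w}.ncard :=
      (Set.ncard_pos (Set.toFinite _)).mpr ⟨e1, h1⟩
    have p2 : 0 < {e : M.E | M.snd e = w}.ncard :=
      (Set.ncard_pos (Set.toFinite _)).mpr ⟨e2, h2⟩
    omega
  · exfalso
    have p1 : 0 < {e : M.E | M.fst e = w}.ncard :=
      (Set.ncard_pos (Set.toFinite _)).mpr ⟨e2, h2⟩
    have p2 : 0 < {e : M.E | M.snd e = w}.ncard :=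
      (Set.ncard_pos (Set.toFinite _)).mpr ⟨e1, h1⟩
    omega
  · exact (Set.ncard_le_one (Set.toFinite _)).mp hA2 e1 h1 e2 h2

/-- A disagreement-edge component is just the two endpoints of the edge. -/
private lemma disEdge_comp_mem (M : Multigraph) {e : M.E} (he : M.IsDisEdge e) :
    ∀ a b : M.V, Relation.EqvGen M.Adj a b →
      ((a = M.fst e ∨ a = M.snd e) ↔ (b = M.fst e ∨ b = M.snd e)) := by
  intro a b h
  induction h with
  | rel a b hab =>
    obtain ⟨g, hg⟩ := hab
    constructor
    · intro ha
      have hspr : M.IsSprout a := by rcases ha with rfl | rfl; exact he.1; exact he.2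
      have hag : M.fst g = a ∨ M.snd g = a := by
        rcases hg with ⟨h1, _⟩ | ⟨_, h2⟩
        · exact Or.inl h1
        · exact Or.inr h2
      have hae : M.fst e = a ∨ M.snd e = a := by
        rcases ha with rfl | rfl
        · exact Or.inl rfl
        · exact Or.inr rfl
      have : g = e := M.sprout_unique_edge hspr hag hae
      subst this
      rcases hg with ⟨_, h2⟩ | ⟨h1, _⟩
      · exact Or.inr h2.symm
      · exact Or.inl h1.symm
    · intro hb
      have hspr : M.IsSprout b := by rcases hb with rfl | rfl; exact he.1; exact he.2
      have hbg : M.fst g = b ∨ M.snd g = b := by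
        rcases hg with ⟨_, h2⟩ | ⟨h1, _⟩
        · exact Or.inr h2
        · exact Or.inl h1
      have hbe : M.fst e = b ∨ M.snd e = b := by
        rcases hb with rfl | rfl
        · exact Or.inl rfl
        · exact Or.inr rfl
      have : g = e := M.sprout_unique_edge hspr hbg hbe
      subst this
      rcases hg with ⟨h1, _⟩ | ⟨_, h2⟩
      · exact Or.inl h1.symm
      · exact Or.inr h2.symm
  | refl a => exact Iff.rfl
  | symm a b _ ih => exact ih.symm
  | trans a b c _ _ ih1 ih2 => exact ih1.trans ih2

/-- Every vertex visited by a walk is the start, the end, or an interior vertex. -/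
private lemma walk_vertex_mem (M : Multigraph) :
    ∀ (l : List M.Dart) (u v : M.V), M.IsWalk u v l → ∀ d ∈ l,
      (M.dartSrc d = u ∨ M.dartSrc d ∈ M.interiorVerts l) ∧
      (M.dartTgt d = v ∨ M.dartTgt d ∈ M.interiorVerts l) := by
  intro l
  induction l with
  | nil => intro u v _ d hd; simp at hd
  | cons d0 ds ih =>
    intro u v hw d hd
    obtain ⟨hsrc, hw'⟩ := hw
    cases ds with
    | nil =>
      have hd0 : d = d0 := by simpa using hd
      subst hd0
      have hv : M.dartTgt d = v := hw'
      exact ⟨Or.inl hsrc, Or.inl hv⟩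
    | cons d1 ds' =>
      have hint : M.interiorVerts (d0 :: d1 :: ds') =
          M.dartTgt d0 :: M.interiorVerts (d1 :: ds') := by
        simp [Multigraph.interiorVerts]
      rcases List.mem_cons.mp hd with rfl | hd'
      · refine ⟨Or.inl hsrc, Or.inr ?_⟩
        rw [hint]; exact List.mem_cons_self
      · obtain ⟨h1, h2⟩ := ih (M.dartTgt d0) v hw' d hd'
        constructor
        · rcases h1 with h1 | h1
          · refine Or.inr ?_; rw [hint, h1]; exact List.mem_cons_self
          · refine Or.inr ?_; rw [hint]; exact List.mem_cons_of_mem _ h1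
        · rcases h2 with h2 | h2
          · exact Or.inl h2
          · refine Or.inr ?_; rw [hint]; exact List.mem_cons_of_mem _ h2

end Multigraph

section Deleted

open Multigraph

variable {G N' : Multigraph} {A' : Set G.E}

local notation "H" => G.deleteDisEdges A'

private lemma mem_edge_of_survivor (hA' : ∀ e ∈ A', G.IsDisEdge e) {e : G.E} {w : G.V}
    (hw : ∀ e' ∈ A', G.fst e' ≠ w ∧ G.snd e' ≠ w) (hend : G.fst e = w ∨ G.snd e = w) :
    e ∉ A' ∧ ∀ e' ∈ A',
      (G.fst e' ≠ G.fst e ∧ G.snd e' ≠ G.fst e) ∧ (G.fst e' ≠ G.snd e ∧ G.snd e' ≠ G.snd e) := by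
  have hne : e ∉ A' := by
    intro h
    rcases hend with h' | h'
    · exact (hw e h).1 h'
    · exact (hw e h).2 h'
  refine ⟨hne, fun e' he' => ?_⟩
  have hd := hA' e' he'
  refine ⟨⟨fun h => ?_, fun h => ?_⟩, ⟨fun h => ?_, fun h => ?_⟩⟩
  · exact hne (by rw [G.sprout_unique_edge hd.1 (Or.inl h.symm) (Or.inl rfl)]; exact he')
  · exact hne (by rw [G.sprout_unique_edge hd.2 (Or.inl h.symm) (Or.inr rfl)]; exact he')
  · exact hne (by rw [G.sprout_unique_edge hd.1 (Or.inr h.symm) (Or.inl rfl)]; exact he')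
  · exact hne (by rw [G.sprout_unique_edge hd.2 (Or.inr h.symm) (Or.inr rfl)]; exact he')

private lemma survivor_of_not_sprout (hA' : ∀ e ∈ A', G.IsDisEdge e) {v : G.V}
    (hv : ¬ G.IsSprout v) : ∀ e' ∈ A', G.fst e' ≠ v ∧ G.snd e' ≠ v := by
  intro e' he'
  constructor
  · intro h; exact hv (h ▸ (hA' e' he').1)
  · intro h; exact hv (h ▸ (hA' e' he').2)

private lemma deg_eq (hA' : ∀ e ∈ A', G.IsDisEdge e) (v : (H).V) :
    (H).degree v = G.degree v.1 := by
  have h1 : {e : G.E | G.fst e = v.1} = Subtype.val '' {f : (H).E | (H).fst f = v} := by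
    ext e
    constructor
    · intro he
      exact ⟨⟨e, mem_edge_of_survivor hA' v.2 (Or.inl he)⟩, Subtype.ext he, rfl⟩
    · rintro ⟨f, hf, rfl⟩
      exact congrArg Subtype.val hf
  have h2 : {e : G.E | G.snd e = v.1} = Subtype.val '' {f : (H).E | (H).snd f = v} := by
    ext e
    constructor
    · intro he
      exact ⟨⟨e, mem_edge_of_survivor hA' v.2 (Or.inr he)⟩, Subtype.ext he, rfl⟩
    · rintro ⟨f, hf, rfl⟩
      exact congrArg Subtype.val hf
  show _ = {e : G.E | G.fst e = v.1}.ncard + {e : G.E | G.snd e = v.1}.ncard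
  rw [h1, h2, Set.ncard_image_of_injOn (Subtype.val_injective.injOn),
    Set.ncard_image_of_injOn (Subtype.val_injective.injOn)]
  rfl

private lemma sprout_iff (hA' : ∀ e ∈ A', G.IsDisEdge e) (v : (H).V) :
    (H).IsSprout v ↔ G.IsSprout v.1 := by
  unfold Multigraph.IsSprout
  rw [deg_eq hA']
  rfl

private lemma disEdge_iff (hA' : ∀ e ∈ A', G.IsDisEdge e) (e : (H).E) :
    (H).IsDisEdge e ↔ G.IsDisEdge e.1 := by
  unfold Multigraph.IsDisEdge
  rw [sprout_iff hA', sprout_iff hA']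
  rfl

private lemma comp_proj {G : Multigraph} {A' : Set G.E} (u v : (G.deleteDisEdges A').V)
    (h : (G.deleteDisEdges A').comp u = (G.deleteDisEdges A').comp v) :
    G.comp u.1 = G.comp v.1 := by
  have h' := Quot.eq.1 h
  clear h
  refine Quot.eqvGen_sound ?_
  induction h' with
  | rel a b hab =>
    obtain ⟨e, he⟩ := hab
    refine Relation.EqvGen.rel _ _ ⟨e.1, ?_⟩
    rcases he with ⟨h1, h2⟩ | ⟨h1, h2⟩
    · exact Or.inl ⟨congrArg Subtype.val h1, congrArg Subtype.val h2⟩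
    · exact Or.inr ⟨congrArg Subtype.val h1, congrArg Subtype.val h2⟩
  | refl a => exact Relation.EqvGen.refl _
  | symm a b _ ih => exact Relation.EqvGen.symm _ _ ih
  | trans a b c _ _ ih1 ih2 => exact Relation.EqvGen.trans _ _ _ ih1 ih2

end Deleted

section Embedded

open Multigraph

variable {K N' : Multigraph}

/-- `x` lies on the path of edge `e`. -/
private def OnP (φ : Multigraph.AgrEmb K N') (x : N'.V) (e : K.E) : Prop :=
  x = φ.vMap (K.fst e) ∨ x = φ.vMap (K.snd e) ∨ x ∈ N'.interiorVerts (φ.path e)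

/-- `x` is associated with the component `c`. -/
private def AssocP (φ : Multigraph.AgrEmb K N') (x : N'.V) (c : K.Comp) : Prop :=
  (∃ u : K.V, K.comp u = c ∧ φ.vMap u = x) ∨
  (∃ e : K.E, K.comp (K.fst e) = c ∧ x ∈ N'.interiorVerts (φ.path e))

/-- The sprout `w` witnesses a junction between the pair of components `S`. -/
private def LinkP (φ : Multigraph.AgrEmb K N') (w : K.V) (S : Set K.Comp) : Prop :=
  (∃ u', u' ≠ w ∧ φ.vMap u' = φ.vMap w ∧ S = {K.comp w, K.comp u'}) ∨
  (∃ e, φ.vMap w ∈ N'.interiorVerts (φ.path e) ∧ S = {K.comp w, K.comp (K.fst e)})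

private def JJ (φ : Multigraph.AgrEmb K N') (c c' : K.Comp) : Prop :=
  ∃ w, K.IsSprout w ∧ LinkP φ w {c, c'}

private lemma comp_snd_eq (e : K.E) : K.comp (K.snd e) = K.comp (K.fst e) :=
  (Quot.sound ⟨e, Or.inl ⟨rfl, rfl⟩⟩).symm

private lemma onP_assoc (φ : Multigraph.AgrEmb K N') {x : N'.V} {e : K.E} (h : OnP φ x e) :
    AssocP φ x (K.comp (K.fst e)) := by
  rcases h with h | h | h
  · exact Or.inl ⟨K.fst e, rfl, h.symm⟩
  · exact Or.inl ⟨K.snd e, comp_snd_eq e, h.symm⟩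
  · exact Or.inr ⟨e, rfl, h⟩

private lemma edge_onP (φ : Multigraph.AgrEmb K N') (f : N'.E) :
    ∃ e : K.E, OnP φ (N'.fst f) e ∧ OnP φ (N'.snd f) e := by
  obtain ⟨e, d, hd, hdf⟩ := φ.covers f
  have hw := φ.walk_ok e
  have h := N'.walk_vertex_mem (φ.path e) _ _ hw d hd
  refine ⟨e, ?_, ?_⟩
  · cases hb : d.2
    · -- dartTgt d = N'.fst f
      have hx : N'.dartTgt d = N'.fst f := by simp [Multigraph.dartTgt, hb, hdf]
      rcases h.2 with h2 | h2
      · exact Or.inr (Or.inl (by rw [← hx, h2]))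
      · exact Or.inr (Or.inr (by rw [← hx]; exact h2))
    · have hx : N'.dartSrc d = N'.fst f := by simp [Multigraph.dartSrc, hb, hdf]
      rcases h.1 with h2 | h2
      · exact Or.inl (by rw [← hx, h2])
      · exact Or.inr (Or.inr (by rw [← hx]; exact h2))
  · cases hb : d.2
    · have hx : N'.dartSrc d = N'.snd f := by simp [Multigraph.dartSrc, hb, hdf]
      rcases h.1 with h2 | h2
      · exact Or.inl (by rw [← hx, h2])
      · exact Or.inr (Or.inr (by rw [← hx]; exact h2))
    · have hx : N'.dartTgt d = N'.snd f := by simp [Multigraph.dartTgt, hb, hdf]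
      rcases h.2 with h2 | h2
      · exact Or.inr (Or.inl (by rw [← hx, h2]))
      · exact Or.inr (Or.inr (by rw [← hx]; exact h2))

private lemma assoc_cases (φ : Multigraph.AgrEmb K N') {x : N'.V} {c c' : K.Comp}
    (h : AssocP φ x c) (h' : AssocP φ x c') : c = c' ∨ JJ φ c c' := by
  rcases h with ⟨u, hu, hx⟩ | ⟨e, he, hx⟩ <;> rcases h' with ⟨u', hu', hx'⟩ | ⟨e', he', hx'⟩
  · by_cases hc : c = c'
    · exact Or.inl hc
    · right
      have hne : u ≠ u' := fun h => hc (by rw [← hu, ← hu', h])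
      have heq : φ.vMap u = φ.vMap u' := by rw [hx, hx']
      rcases φ.two_to_one u u' hne heq with ⟨hs, _⟩ | ⟨hs, _⟩
      · exact ⟨u, hs, Or.inl ⟨u', hne.symm, heq.symm, by rw [← hu, ← hu']⟩⟩
      · exact ⟨u', hs, Or.inl ⟨u, hne, heq, by rw [← hu, ← hu']; exact Set.pair_comm _ _⟩⟩
  · have hs : K.IsSprout u := by
      by_contra hns
      exact φ.interior_fresh e' x hx' u hns hx
    by_cases hc : c = c'
    · exact Or.inl hc
    · exact Or.inr ⟨u, hs, Or.inr ⟨e', by rw [hx]; exact hx',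
        by rw [← hu, ← he']⟩⟩
  · have hs : K.IsSprout u' := by
      by_contra hns
      exact φ.interior_fresh e x hx u' hns hx'
    by_cases hc : c = c'
    · exact Or.inl hc
    · exact Or.inr ⟨u', hs, Or.inr ⟨e, by rw [hx']; exact hx,
        by rw [← he, ← hu']; exact Set.pair_comm _ _⟩⟩
  · by_cases hee : e = e'
    · exact Or.inl (by rw [← he, ← he', hee])
    · exact absurd hx' (φ.interior_disj e e' hee x hx)

private lemma not_sprout_of_collision (φ : Multigraph.AgrEmb K N') {u w : K.V}
    (hs : K.IsSprout w) (hu1 : u ≠ w) (hu2 : φ.vMap u = φ.vMap w) : ¬ K.IsSprout u := by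
  rcases φ.two_to_one u w hu1 hu2 with ⟨_, hiso⟩ | ⟨_, hiso⟩
  · exfalso; have := hiso.1; rw [hs.1] at this; simp at this
  · intro hsu; have := hiso.1; rw [hsu.1] at this; simp at this

private lemma link_det (φ : Multigraph.AgrEmb K N') {w : K.V} (hs : K.IsSprout w)
    {S S' : Set K.Comp} (h : LinkP φ w S) (h' : LinkP φ w S') : S = S' := by
  rcases h with ⟨u, hu1, hu2, rfl⟩ | ⟨e, he, rfl⟩ <;>
    rcases h' with ⟨u', hu1', hu2', rfl⟩ | ⟨e', he', rfl⟩
  · suffices h : u = u' by rw [h]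
    by_contra hne
    exact φ.at_most_two u u' w hne hu1' hu1 ⟨hu2.trans hu2'.symm, hu2'⟩
  · exfalso
    exact φ.interior_fresh e' (φ.vMap w) he' u (not_sprout_of_collision φ hs hu1 hu2) hu2
  · exfalso
    exact φ.interior_fresh e (φ.vMap w) he u' (not_sprout_of_collision φ hs hu1' hu2') hu2'
  · suffices h : e = e' by rw [h]
    by_contra hne
    exact φ.interior_disj e e' hne (φ.vMap w) he he'

private lemma rtg_of_assoc (φ : Multigraph.AgrEmb K N') :
    ∀ {x y : N'.V}, Relation.ReflTransGen N'.Adj x y → ∀ {c c' : K.Comp},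
      AssocP φ x c → AssocP φ y c' → Relation.ReflTransGen (JJ φ) c c' := by
  intro x y h
  induction h with
  | refl =>
    intro c c' h1 h2
    rcases assoc_cases φ h1 h2 with rfl | hj
    · exact Relation.ReflTransGen.refl
    · exact Relation.ReflTransGen.single hj
  | @tail b z _ h2 ih =>
    intro c c' hx hz
    obtain ⟨f, hf⟩ := h2
    obtain ⟨e, hf1, hf2⟩ := edge_onP φ f
    have hb : AssocP φ b (K.comp (K.fst e)) := by
      rcases hf with ⟨h1', _⟩ | ⟨_, h2'⟩
      · exact h1' ▸ onP_assoc φ hf1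
      · exact h2' ▸ onP_assoc φ hf2
    have hz' : AssocP φ z (K.comp (K.fst e)) := by
      rcases hf with ⟨_, h2'⟩ | ⟨h1', _⟩
      · exact h2' ▸ onP_assoc φ hf2
      · exact h1' ▸ onP_assoc φ hf1
    refine (ih hx hb).trans ?_
    rcases assoc_cases φ hz' hz with rfl | hj
    · exact Relation.ReflTransGen.refl
    · exact Relation.ReflTransGen.single hj

private lemma jj_conn (φ : Multigraph.AgrEmb K N') (hco : N'.Connected) (c c' : K.Comp) :
    Relation.ReflTransGen (JJ φ) c c' := by
  obtain ⟨u, hu⟩ := c.exists_rep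
  obtain ⟨u', hu'⟩ := c'.exists_rep
  exact rtg_of_assoc φ (hco.2 (φ.vMap u) (φ.vMap u'))
    (Or.inl ⟨u, hu, rfl⟩) (Or.inl ⟨u', hu', rfl⟩)

private lemma card_comp_le (φ : Multigraph.AgrEmb K N') (hne : Nonempty K.V)
    (hco : N'.Connected) :
    Nat.card K.Comp ≤ {w : K.V | K.IsSprout w}.ncard + 1 := by
  classical
  haveI := hne
  haveI : Nonempty K.Comp := ⟨K.comp (Classical.arbitrary _)⟩
  set r : K.Comp := Classical.arbitrary _ with hr
  have hreach : ∀ c, ∃ n, Steps (JJ φ) n r c := fun c => exists_steps (jj_conn φ hco r c)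
  set dd : K.Comp → ℕ := fun c => sInf {n | Steps (JJ φ) n r c} with hdd
  have hstep : ∀ c, Steps (JJ φ) (dd c) r c := fun c => Nat.sInf_mem (hreach c)
  have hpar : ∀ c, c ≠ r → ∃ w, K.IsSprout w ∧ ∃ p, dd p < dd c ∧ LinkP φ w {p, c} := by
    intro c hc
    have h0 : dd c ≠ 0 := by
      intro h
      have h1 := hstep c
      rw [h] at h1
      exact hc (h1 : r = c).symm
    obtain ⟨m, hm⟩ := Nat.exists_eq_succ_of_ne_zero h0
    have h1 := hstep c
    rw [hm] at h1
    obtain ⟨p, hp1, hp2⟩ := h1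
    have hdp : dd p ≤ m := Nat.sInf_le hp1
    obtain ⟨w, hw1, hw2⟩ := hp2
    exact ⟨w, hw1, p, by omega, hw2⟩
  set F : K.Comp → K.V := fun c =>
    if h : ∃ w, K.IsSprout w ∧ ∃ p, dd p < dd c ∧ LinkP φ w {p, c} then h.choose
    else Classical.arbitrary _ with hF
  have hQ : ∀ c, c ≠ r → K.IsSprout (F c) ∧ ∃ p, dd p < dd c ∧ LinkP φ (F c) {p, c} := by
    intro c hc
    have h := hpar c hc
    rw [hF]
    simp only [dif_pos h]
    exact h.choose_spec
  have hinj : Set.InjOn F {c | c ≠ r} := by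
    intro c hc c' hc' hfe
    obtain ⟨hs, p, hp, hl⟩ := hQ c hc
    obtain ⟨hs', p', hp', hl'⟩ := hQ c' hc'
    rw [hfe] at hl
    have hset := link_det φ hs' hl hl'
    rcases Set.pair_eq_pair_iff.mp hset with ⟨h1, h2⟩ | ⟨h1, h2⟩
    · exact h2
    · exfalso
      rw [h1] at hp
      rw [← h2] at hp'
      omega
  have hcount : ({c : K.Comp | c ≠ r}).ncard ≤ ({w : K.V | K.IsSprout w}).ncard :=
    Set.ncard_le_ncard_of_injOn F
      (fun c hc => show F c ∈ {w : K.V | K.IsSprout w} from (hQ c hc).1) hinj (Set.toFinite _)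
  have hcompl : ({c : K.Comp | c ≠ r}) = ({r} : Set K.Comp)ᶜ := by ext c; simp
  have htot := Set.ncard_add_ncard_compl ({r} : Set K.Comp)
  rw [Set.ncard_singleton] at htot
  rw [hcompl] at hcount
  omega

end Embedded

end AuxDev

/-- If an agreement graph `G` of two phylogenetic networks `N` and `N'` contains
`m` agreement subgraphs, then it contains at least `m - 1` disagreement edges. -/
theorem agreement_graph_disEdge_lower_bound (n : ℕ) (N N' G : Multigraph)
    (hN : N.IsPhyloNet n) (hN' : N'.IsPhyloNet n)
    (hG : G.IsAgreementGraph N N') :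
    G.agreementCompCount - 1 ≤ G.disEdgeCount := by
  classical
  obtain ⟨hsp, A, A', hAdis, hA'dis, _, _, _, ⟨φ⟩⟩ := hG
  rcases Nat.eq_zero_or_pos G.agreementCompCount with h0 | hpos
  · rw [h0]; exact Nat.zero_le _
  -- a sprout-free component exists, so the deleted graph has a vertex
  have hpos' : 0 < {c : G.Comp | ¬ G.CompHasSprout c}.ncard := hpos
  obtain ⟨c0, hc0⟩ := (Set.ncard_pos (Set.toFinite _)).mp hpos'
  obtain ⟨v0, hv0⟩ := c0.exists_rep
  have hv0ns : ¬ G.IsSprout v0 := fun h => hc0 ⟨v0, hv0, h⟩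
  haveI hneH : Nonempty (G.deleteDisEdges A').V :=
    ⟨⟨v0, survivor_of_not_sprout hA'dis hv0ns⟩⟩
  haveI : Nonempty (G.deleteDisEdges A').Comp :=
    ⟨(G.deleteDisEdges A').comp (Classical.arbitrary _)⟩
  set H := G.deleteDisEdges A' with hHdef
  -- the four cardinalities of `H`
  set mH := {c : H.Comp | ¬ H.CompHasSprout c}.ncard with hmH
  set tH := {c : H.Comp | H.CompHasSprout c}.ncard with htH
  set dH := {e : H.E | H.IsDisEdge e}.ncard with hdH
  set sH := {w : H.V | H.IsSprout w}.ncard with hsH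
  -- partition of the components
  have hcompl : {c : H.Comp | H.CompHasSprout c}ᶜ = {c : H.Comp | ¬ H.CompHasSprout c} := rfl
  have htot : tH + mH = Nat.card H.Comp := by
    rw [htH, hmH, ← hcompl]
    exact Set.ncard_add_ncard_compl _
  -- connectivity bound
  have hcard : Nat.card H.Comp ≤ sH + 1 := card_comp_le φ hneH hN'.1
  -- each sprout is an endpoint of a disagreement edge
  have hs2d : sH ≤ dH + dH := by
    have hsub : {w : H.V | H.IsSprout w} ⊆
        (fun e => H.fst e) '' {e : H.E | H.IsDisEdge e} ∪
        (fun e => H.snd e) '' {e : H.E | H.IsDisEdge e} := by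
      intro w hw
      have hwG : G.IsSprout w.1 := (sprout_iff hA'dis w).mp hw
      obtain ⟨e, he1, he2⟩ := hsp w.1 hwG
      have hmem := mem_edge_of_survivor hA'dis w.2 he2
      have hedis : H.IsDisEdge (⟨e, hmem⟩ : H.E) :=
        (disEdge_iff hA'dis (⟨e, hmem⟩ : H.E)).mpr he1
      rcases he2 with h | h
      · exact Or.inl ⟨⟨e, hmem⟩, hedis, Subtype.ext h⟩
      · exact Or.inr ⟨⟨e, hmem⟩, hedis, Subtype.ext h⟩
    calc sH ≤ ((fun e => H.fst e) '' {e : H.E | H.IsDisEdge e} ∪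
        (fun e => H.snd e) '' {e : H.E | H.IsDisEdge e}).ncard :=
          Set.ncard_le_ncard hsub (Set.toFinite _)
      _ ≤ ((fun e => H.fst e) '' {e : H.E | H.IsDisEdge e}).ncard +
          ((fun e => H.snd e) '' {e : H.E | H.IsDisEdge e}).ncard := Set.ncard_union_le _ _
      _ ≤ dH + dH := by
          exact Nat.add_le_add (Set.ncard_image_le (Set.toFinite _))
            (Set.ncard_image_le (Set.toFinite _))
  -- disagreement edges inject into sprouty components
  have hd2t : dH ≤ tH := by
    refine Set.ncard_le_ncard_of_injOn (fun e => H.comp (H.fst e)) ?_ ?_ (Set.toFinite _)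
    · exact fun e he => ⟨H.fst e, rfl, he.1⟩
    · intro e he e' he' hcomp
      have hEq : Relation.EqvGen H.Adj (H.fst e) (H.fst e') := Quot.eq.1 hcomp
      have hmem := (H.disEdge_comp_mem he _ _ hEq).mp (Or.inl rfl)
      have h2 : H.fst e = H.fst e' ∨ H.snd e = H.fst e' := by
        rcases hmem with h | h
        · exact Or.inl h.symm
        · exact Or.inr h.symm
      exact (H.sprout_unique_edge he'.1 (Or.inl rfl) h2).symm
  -- disagreement edges of `H` inject into those of `G`
  have hdk : dH ≤ G.disEdgeCount := by
    refine Set.ncard_le_ncard_of_injOn Subtype.val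
      (fun e he => (disEdge_iff hA'dis e).mp he) (Subtype.val_injective.injOn) (Set.toFinite _)
  -- sprout-free components of `G` inject into those of `H`
  have hm : G.agreementCompCount ≤ mH := by
    set Φ : G.Comp → H.Comp := fun c =>
      if h : ∃ v : H.V, G.comp v.1 = c then H.comp h.choose
      else Classical.arbitrary _ with hΦ
    have hex : ∀ c ∈ {c : G.Comp | ¬ G.CompHasSprout c}, ∃ v : H.V, G.comp v.1 = c := by
      intro c hc
      obtain ⟨v, hv⟩ := c.exists_rep
      have hvns : ¬ G.IsSprout v := fun h => hc ⟨v, hv, h⟩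
      exact ⟨⟨v, survivor_of_not_sprout hA'dis hvns⟩, hv⟩
    refine Set.ncard_le_ncard_of_injOn Φ ?_ ?_ (Set.toFinite _)
    · intro c hc
      have h := hex c hc
      show ¬ H.CompHasSprout (Φ c)
      rw [hΦ]
      simp only [dif_pos h]
      rintro ⟨u, hcomp, hus⟩
      have h1 : G.comp u.1 = G.comp h.choose.1 := comp_proj _ _ hcomp
      rw [h.choose_spec] at h1
      exact hc ⟨u.1, h1, (sprout_iff hA'dis u).mp hus⟩
    · intro c hc c' hc' hfe
      have h := hex c hc
      have h' := hex c' hc'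
      rw [hΦ] at hfe
      simp only [dif_pos h, dif_pos h'] at hfe
      have h1 : G.comp h.choose.1 = G.comp h'.choose.1 := comp_proj _ _ hfe
      rw [h.choose_spec, h'.choose_spec] at h1
      exact h1
  omega
end
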